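/- In the quantum plane O_{−1}(ℚ²) (the quantum plane over ℚ with q = −1), the elements x⁴ + 2 and x² − y² are both prime. -/

import Mathlib

noncomputable section

/-- The defining relation of the quantum plane: `y * x = q • (x * y)`. -/
inductive QRel (F : Type) [Field F] (q : F) :
    FreeAlgebra F (Fin 2) → FreeAlgebra F (Fin 2) → Prop
  | rel : QRel F q (FreeAlgebra.ι F 1 * FreeAlgebra.ι F 0)
      (q • (FreeAlgebra.ι F 0 * FreeAlgebra.ι F 1))

/-- The quantum plane `O_q(F²)`. -/
abbrev QPlane (F : Type) [Field F] (q : F) : Type := RingQuot (QRel F q)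

/-- The generator `x` of the quantum plane. -/
def Qx (F : Type) [Field F] (q : F) : QPlane F q :=
  RingQuot.mkAlgHom F (QRel F q) (FreeAlgebra.ι F 0)

/-- The generator `y` of the quantum plane. -/
def Qy (F : Type) [Field F] (q : F) : QPlane F q :=
  RingQuot.mkAlgHom F (QRel F q) (FreeAlgebra.ι F 1)

/-- `r` divides `s` if `s = r·t` or `s = t·r` for some `t`. -/
def EltDvd {R : Type} [Ring R] (r s : R) : Prop :=
  ∃ t : R, s = r * t ∨ s = t * r

/-- `r` is prime if `r ∣ s·t` implies `r ∣ s` or `r ∣ t`. -/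
def IsPrimeElt {R : Type} [Ring R] (r : R) : Prop :=
  ∀ s t : R, EltDvd r (s * t) → EltDvd r s ∨ EltDvd r t

namespace QP17

local notation "Q" => QPlane ℚ (-1)
local notation "x" => Qx ℚ (-1)
local notation "y" => Qy ℚ (-1)

lemma hyx : (y) * (x) = -((x) * (y)) := by
  have h := RingQuot.mkAlgHom_rel ℚ (QRel.rel (F := ℚ) (q := -1))
  simpa [Qx, Qy, map_smul, neg_smul, one_smul] using h

lemma adjoin_top : Algebra.adjoin ℚ {(x : Q), y} = ⊤ := by
  have hsurj := RingQuot.mkAlgHom_surjective ℚ (QRel ℚ (-1))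
  have h1 : (Algebra.adjoin ℚ (Set.range (FreeAlgebra.ι ℚ : Fin 2 → FreeAlgebra ℚ (Fin 2)))).map
      (RingQuot.mkAlgHom ℚ (QRel ℚ (-1))) = ⊤ := by
    rw [FreeAlgebra.adjoin_range_ι, Algebra.map_top]
    rwa [← AlgHom.range_eq_top] at hsurj
  rw [AlgHom.map_adjoin] at h1
  rw [← h1]
  congr 1
  rw [← Set.range_comp]
  ext z
  constructor
  · rintro (rfl | rfl)
    · exact ⟨0, rfl⟩
    · exact ⟨1, rfl⟩
  · rintro ⟨i, rfl⟩
    fin_cases i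
    · left; rfl
    · right; rfl

/-- To prove a property for all elements of the quantum plane, it suffices
to give a subalgebra containing x and y. -/
lemma mem_of_xy (S : Subalgebra ℚ Q) (hx : (x) ∈ S) (hy : (y) ∈ S) (z : Q) : z ∈ S := by
  have : ⊤ ≤ S := by
    rw [← adjoin_top]
    apply Algebra.adjoin_le
    rintro w (rfl | rfl) <;> assumption
  exact this (Algebra.mem_top)


lemma neg_one_sq_Q : (-1 : Q) ^ 2 = 1 := by
  rw [pow_two, neg_mul (1 : Q) (-1 : Q), one_mul, neg_neg]

/-- powers of -1 are central -/
lemma hc (e : ℕ) (a : Q) : a * (-1 : Q) ^ e = (-1 : Q) ^ e * a :=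
  (((Commute.neg_one_left a).pow_left e).eq).symm

lemma x2y : (x) ^ 2 * y = y * (x) ^ 2 := by
  have h2 : (x) * (y) = -((y) * (x)) := by rw [hyx, neg_neg]
  calc (x) ^ 2 * y = (x) * ((x) * y) := by rw [pow_two, mul_assoc]
  _ = -((x) * ((y) * x)) := by rw [h2, mul_neg (x) ((y) * x)]
  _ = -(((x) * y) * x) := by rw [mul_assoc]
  _ = ((y) * x) * x := by rw [h2, neg_mul ((y) * x) (x), neg_neg]
  _ = y * (x) ^ 2 := by rw [pow_two, mul_assoc]

lemma y2x : (y) ^ 2 * x = (x) * (y) ^ 2 := by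
  calc (y) ^ 2 * x = (y) * ((y) * x) := by rw [pow_two, mul_assoc]
  _ = -((y) * ((x) * y)) := by rw [hyx, mul_neg (y) ((x) * y)]
  _ = -(((y) * x) * y) := by rw [mul_assoc]
  _ = ((x) * y) * y := by rw [hyx, neg_mul ((x) * y) (y), neg_neg]
  _ = (x) * (y) ^ 2 := by rw [pow_two, mul_assoc]

lemma x4y : (x) ^ 4 * y = y * (x) ^ 4 := by
  have h : (x) ^ 4 = (x) ^ 2 * (x) ^ 2 := by rw [← pow_add]
  rw [h, mul_assoc, x2y, ← mul_assoc, x2y, mul_assoc]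

lemma central_c1 (z : Q) : ((x) ^ 4 + 2) * z = z * ((x) ^ 4 + 2) := by
  have hz := mem_of_xy (Subalgebra.centralizer ℚ {(x) ^ 4 + 2}) ?_ ?_ z
  · exact (Subalgebra.mem_centralizer_iff ℚ).mp hz _ (Set.mem_singleton _)
  · rw [Subalgebra.mem_centralizer_iff]
    rintro g hg
    rcases hg with rfl
    rw [add_mul, mul_add, ← pow_succ, ← pow_succ']
    rw [show (2 : Q) * x = (x) * 2 from (Commute.ofNat_left 2 (x)).eq]
  · rw [Subalgebra.mem_centralizer_iff]
    rintro g hg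
    rcases hg with rfl
    rw [add_mul, mul_add, x4y]
    rw [show (2 : Q) * y = (y) * 2 from (Commute.ofNat_left 2 (y)).eq]

lemma central_c2 (z : Q) : ((x) ^ 2 - (y) ^ 2) * z = z * ((x) ^ 2 - (y) ^ 2) := by
  have hz := mem_of_xy (Subalgebra.centralizer ℚ {(x) ^ 2 - (y) ^ 2}) ?_ ?_ z
  · exact (Subalgebra.mem_centralizer_iff ℚ).mp hz _ (Set.mem_singleton _)
  · rw [Subalgebra.mem_centralizer_iff]
    rintro g hg
    rcases hg with rfl
    rw [sub_mul, mul_sub, ← pow_succ, ← pow_succ', y2x]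
  · rw [Subalgebra.mem_centralizer_iff]
    rintro g hg
    rcases hg with rfl
    rw [sub_mul, mul_sub, ← pow_succ, ← pow_succ', x2y]

lemma ysemi (k : ℕ) : (y) * (x) ^ k = ((-1 : Q) ^ k * (x) ^ k) * y := by
  have h : SemiconjBy (y) (x) (-(x)) := by
    unfold SemiconjBy
    rw [hyx, neg_mul (x) (y)]
  have h2 := h.pow_right k
  unfold SemiconjBy at h2
  rw [h2, neg_pow (x) k]

lemma ypow_xpow (n k : ℕ) :
    (y) ^ n * (x) ^ k = (-1 : Q) ^ (n * k) * ((x) ^ k * (y) ^ n) := by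
  induction n with
  | zero => simp
  | succ n ih =>
    calc (y) ^ (n+1) * (x) ^ k = (y) ^ n * ((y) * (x) ^ k) := by
          rw [pow_succ, mul_assoc]
    _ = (y) ^ n * (((-1 : Q) ^ k * (x) ^ k) * y) := by rw [ysemi]
    _ = ((y) ^ n * ((-1 : Q) ^ k * (x) ^ k)) * y := by simp only [mul_assoc]
    _ = (((y) ^ n * (-1 : Q) ^ k) * (x) ^ k) * y := by simp only [mul_assoc]
    _ = (((-1 : Q) ^ k * (y) ^ n) * (x) ^ k) * y := by rw [hc]
    _ = ((-1 : Q) ^ k * ((y) ^ n * (x) ^ k)) * y := by simp only [mul_assoc]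
    _ = ((-1 : Q) ^ k * ((-1 : Q) ^ (n * k) * ((x) ^ k * (y) ^ n))) * y := by rw [ih]
    _ = ((-1 : Q) ^ (k + n * k)) * (((x) ^ k * (y) ^ n) * y) := by
          rw [pow_add]; simp only [mul_assoc]
    _ = (-1 : Q) ^ ((n+1) * k) * ((x) ^ k * (y) ^ (n+1)) := by
          rw [mul_assoc, ← pow_succ]
          congr 2
          ring

lemma mono_mul (m n k l : ℕ) :
    ((x) ^ m * (y) ^ n) * ((x) ^ k * (y) ^ l)
      = (-1 : Q) ^ (n * k) * ((x) ^ (m + k) * (y) ^ (n + l)) := by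
  calc ((x) ^ m * (y) ^ n) * ((x) ^ k * (y) ^ l)
      = ((x) ^ m * ((y) ^ n * (x) ^ k)) * (y) ^ l := by
        rw [mul_assoc, mul_assoc, mul_assoc]
  _ = ((x) ^ m * ((-1 : Q) ^ (n * k) * ((x) ^ k * (y) ^ n))) * (y) ^ l := by rw [ypow_xpow]
  _ = (((x) ^ m * (-1 : Q) ^ (n * k)) * ((x) ^ k * (y) ^ n)) * (y) ^ l := by
        simp only [mul_assoc]
  _ = (-1 : Q) ^ (n * k) * (((x) ^ m * (x) ^ k) * ((y) ^ n * (y) ^ l)) := by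
        rw [hc]; simp only [mul_assoc]
  _ = (-1 : Q) ^ (n * k) * ((x) ^ (m + k) * (y) ^ (n + l)) := by rw [pow_add, pow_add]

open Polynomial in
/-- companion matrix of X^4+2 -/
def Cq : Matrix (Fin 4) (Fin 4) ℚ := !![0,0,0,-2; 1,0,0,0; 0,1,0,0; 0,0,1,0]

def Dq : Matrix (Fin 4) (Fin 4) ℚ := !![1,0,0,0; 0,-1,0,0; 0,0,1,0; 0,0,0,-1]

lemma DC : Dq * Cq = -(Cq * Dq) := by
  ext i j
  fin_cases i <;> fin_cases j <;>
    simp [Cq, Dq, Matrix.mul_apply, Fin.sum_univ_four, Matrix.neg_apply, Matrix.vecHead,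
      Matrix.vecTail]

lemma D2 : Dq * Dq = 1 := by
  ext i j
  fin_cases i <;> fin_cases j <;>
    simp [Dq, Matrix.mul_apply, Fin.sum_univ_four, Matrix.one_apply, Matrix.vecHead,
      Matrix.vecTail]

lemma C4 : Cq ^ 4 + 2 = 0 := by
  have h4 : Cq ^ 4 = Cq * Cq * (Cq * Cq) := by
    simp only [pow_succ, pow_zero, one_mul, mul_assoc]
  rw [h4, ← Matrix.diagonal_ofNat (α := ℚ) (n := Fin 4) 2]
  ext i j
  fin_cases i <;> fin_cases j <;>
    simp [Cq, Matrix.mul_apply, Fin.sum_univ_four, Matrix.add_apply, Matrix.diagonal_apply,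
      Matrix.vecHead, Matrix.vecTail] <;> norm_num

abbrev P1 := Polynomial ℚ

abbrev Cm : Matrix (Fin 4) (Fin 4) ℚ →+* Matrix (Fin 4) (Fin 4) P1 :=
  (Polynomial.C : ℚ →+* P1).mapMatrix

def Xm1 : Matrix (Fin 4) (Fin 4) P1 := Cm Cq

def Ym1 : Matrix (Fin 4) (Fin 4) P1 := (Polynomial.X : P1) • Cm Dq

lemma rel1 : Ym1 * Xm1 = (-1 : ℚ) • (Xm1 * Ym1) := by
  rw [Ym1, Xm1, smul_mul_assoc, ← map_mul, DC, map_neg, mul_smul_comm, ← map_mul]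
  rw [neg_one_smul, smul_neg]

def rho1 : QPlane ℚ (-1) →ₐ[ℚ] Matrix (Fin 4) (Fin 4) P1 :=
  RingQuot.liftAlgHom ℚ ⟨FreeAlgebra.lift ℚ ![Xm1, Ym1], by
    rintro a b ⟨⟩
    simp only [map_mul, map_smul, FreeAlgebra.lift_ι_apply]
    simp only [Matrix.cons_val_zero, Matrix.cons_val_one, Matrix.head_cons]
    exact rel1⟩

lemma rho1_x : rho1 (x) = Xm1 := by
  rw [Qx, rho1, RingQuot.liftAlgHom_mkAlgHom_apply, FreeAlgebra.lift_ι_apply]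
  simp

lemma rho1_y : rho1 (y) = Ym1 := by
  rw [Qy, rho1, RingQuot.liftAlgHom_mkAlgHom_apply, FreeAlgebra.lift_ι_apply]
  simp

lemma rho1_c1 : rho1 ((x) ^ 4 + 2) = 0 := by
  rw [map_add, map_pow, rho1_x, map_ofNat, Xm1, ← map_pow, ← map_ofNat Cm 2, ← map_add, C4,
    map_zero]

def Xm2 : Matrix (Fin 2) (Fin 2) P1 := !![Polynomial.X, 0; 0, -Polynomial.X]

def Ym2 : Matrix (Fin 2) (Fin 2) P1 := !![0, Polynomial.X; Polynomial.X, 0]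

lemma rel2 : Ym2 * Xm2 = (-1 : ℚ) • (Xm2 * Ym2) := by
  ext i j
  fin_cases i <;> fin_cases j <;>
    simp [Xm2, Ym2, Matrix.mul_apply, Fin.sum_univ_two, Matrix.smul_apply] <;> ring

def rho2 : QPlane ℚ (-1) →ₐ[ℚ] Matrix (Fin 2) (Fin 2) P1 :=
  RingQuot.liftAlgHom ℚ ⟨FreeAlgebra.lift ℚ ![Xm2, Ym2], by
    rintro a b ⟨⟩
    simp only [map_mul, map_smul, FreeAlgebra.lift_ι_apply]
    simp only [Matrix.cons_val_zero, Matrix.cons_val_one, Matrix.head_cons]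
    exact rel2⟩

lemma rho2_x : rho2 (x) = Xm2 := by
  rw [Qx, rho2, RingQuot.liftAlgHom_mkAlgHom_apply, FreeAlgebra.lift_ι_apply]
  simp

lemma rho2_y : rho2 (y) = Ym2 := by
  rw [Qy, rho2, RingQuot.liftAlgHom_mkAlgHom_apply, FreeAlgebra.lift_ι_apply]
  simp

lemma rho2_c2 : rho2 ((x) ^ 2 - (y) ^ 2) = 0 := by
  rw [map_sub, map_pow, map_pow, rho2_x, rho2_y]
  ext i j
  fin_cases i <;> fin_cases j <;>
    simp [Xm2, Ym2, pow_two, Matrix.mul_apply, Fin.sum_univ_two, Matrix.sub_apply]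

open Polynomial

/-- the substitution t ↦ -t -/
def sg (p : P1) : P1 := p.comp (-Polynomial.X)

lemma sg_add (p q : P1) : sg (p + q) = sg p + sg q := Polynomial.add_comp

lemma sg_mul (p q : P1) : sg (p * q) = sg p * sg q := Polynomial.mul_comp _ _ _

lemma sg_neg (p : P1) : sg (-p) = -sg p := Polynomial.neg_comp

lemma sg_smul (a : ℚ) (p : P1) : sg (a • p) = a • sg p := by
  rw [Polynomial.smul_eq_C_mul, Polynomial.smul_eq_C_mul, sg, Polynomial.mul_comp,
    Polynomial.C_comp]; rfl

lemma sg_sg (p : P1) : sg (sg p) = p := by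
  rw [sg, sg, Polynomial.comp_assoc, Polynomial.neg_comp, Polynomial.X_comp, neg_neg,
    Polynomial.comp_X]

lemma sg_X : sg Polynomial.X = -Polynomial.X := Polynomial.X_comp

lemma sg_zero : sg 0 = 0 := Polynomial.zero_comp

lemma sg_one : sg 1 = 1 := Polynomial.one_comp

lemma sg_eq_zero_iff {p : P1} : sg p = 0 ↔ p = 0 := by
  constructor
  · intro h
    have := congrArg sg h
    rwa [sg_sg, sg_zero] at this
  · rintro rfl; exact sg_zero

lemma natDegree_sg (p : P1) : (sg p).natDegree = p.natDegree := by
  rw [sg, Polynomial.natDegree_comp, Polynomial.natDegree_neg, Polynomial.natDegree_X, mul_one]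

lemma leadingCoeff_sg (p : P1) :
    (sg p).leadingCoeff = (-1 : ℚ) ^ p.natDegree * p.leadingCoeff := by
  rcases eq_or_ne p.natDegree 0 with h0 | h0
  · rw [Polynomial.eq_C_of_natDegree_eq_zero h0]
    simp [sg]
  · rw [sg, Polynomial.leadingCoeff_comp (by simp : (-Polynomial.X : P1).natDegree ≠ 0)]
    simp [mul_comm]

/-- anisotropy of the norm form for case 2 -/
lemma L2 {p q : P1} (h : p * sg p + q * sg q = 0) : p = 0 ∧ q = 0 := by
  by_cases hp : p = 0
  · subst hp
    simp only [sg_zero, mul_zero, zero_mul, zero_add] at h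
    rcases mul_eq_zero.mp h with h' | h'
    · exact ⟨rfl, h'⟩
    · exact ⟨rfl, sg_eq_zero_iff.mp h'⟩
  by_cases hq : q = 0
  · subst hq
    simp only [sg_zero, mul_zero, add_zero] at h
    rcases mul_eq_zero.mp h with h' | h'
    · exact absurd h' hp
    · exact absurd (sg_eq_zero_iff.mp h') hp
  exfalso
  have hsp : sg p ≠ 0 := fun h' => hp (sg_eq_zero_iff.mp h')
  have hsq : sg q ≠ 0 := fun h' => hq (sg_eq_zero_iff.mp h')
  have heq : p * sg p = -(q * sg q) := by linear_combination h
  have hdeg : p.natDegree = q.natDegree := by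
    have h1 := congrArg Polynomial.natDegree heq
    rwa [Polynomial.natDegree_mul hp hsp, Polynomial.natDegree_neg,
      Polynomial.natDegree_mul hq hsq, natDegree_sg, natDegree_sg, ← two_mul, ← two_mul,
      Nat.mul_left_cancel_iff (by norm_num)] at h1
  have hlc := congrArg Polynomial.leadingCoeff heq
  rw [Polynomial.leadingCoeff_mul, Polynomial.leadingCoeff_neg, Polynomial.leadingCoeff_mul,
    leadingCoeff_sg, leadingCoeff_sg, hdeg] at hlc
  set a := p.leadingCoeff with ha
  set b := q.leadingCoeff with hb
  have hane : a ≠ 0 := Polynomial.leadingCoeff_ne_zero.mpr hp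
  have hbne : b ≠ 0 := Polynomial.leadingCoeff_ne_zero.mpr hq
  have hd0 : ((-1 : ℚ) ^ q.natDegree) ≠ 0 := pow_ne_zero _ (by norm_num)
  have hsq2 : a ^ 2 + b ^ 2 = 0 := by
    have h2 : ((-1 : ℚ) ^ q.natDegree) * (a ^ 2 + b ^ 2) = 0 := by linear_combination hlc
    rcases mul_eq_zero.mp h2 with h' | h'
    · exact absurd h' hd0
    · exact h'
  have ha2 : a ^ 2 = 0 := by nlinarith [sq_nonneg a, sq_nonneg b]
  exact hane (pow_eq_zero_iff (n := 2) (by norm_num) |>.mp ha2)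

/-- the structural condition satisfied by images of `rho2` -/
def good2 (M : Matrix (Fin 2) (Fin 2) P1) : Prop :=
  M 1 1 = sg (M 0 0) ∧ M 1 0 = -sg (M 0 1)

lemma entry00 (M N : Matrix (Fin 2) (Fin 2) P1) :
    (M * N) 0 0 = M 0 0 * N 0 0 + M 0 1 * N 1 0 := by
  rw [Matrix.mul_apply, Fin.sum_univ_two]

lemma entry01 (M N : Matrix (Fin 2) (Fin 2) P1) :
    (M * N) 0 1 = M 0 0 * N 0 1 + M 0 1 * N 1 1 := by
  rw [Matrix.mul_apply, Fin.sum_univ_two]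

lemma entry10 (M N : Matrix (Fin 2) (Fin 2) P1) :
    (M * N) 1 0 = M 1 0 * N 0 0 + M 1 1 * N 1 0 := by
  rw [Matrix.mul_apply, Fin.sum_univ_two]

lemma entry11 (M N : Matrix (Fin 2) (Fin 2) P1) :
    (M * N) 1 1 = M 1 0 * N 0 1 + M 1 1 * N 1 1 := by
  rw [Matrix.mul_apply, Fin.sum_univ_two]

def S2m : Subalgebra ℚ (Matrix (Fin 2) (Fin 2) P1) where
  carrier := {M | good2 M}
  mul_mem' := by
    rintro M N ⟨hM1, hM2⟩ ⟨hN1, hN2⟩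
    constructor
    · rw [entry11, entry00, hM1, hM2, hN1, hN2, sg_add, sg_mul, sg_mul, sg_neg, sg_sg]
      ring
    · rw [entry10, entry01, hM1, hM2, hN1, hN2, sg_add, sg_mul, sg_mul, sg_sg]
      ring
  add_mem' := by
    rintro M N ⟨hM1, hM2⟩ ⟨hN1, hN2⟩
    constructor
    · rw [Matrix.add_apply, Matrix.add_apply, hM1, hN1, sg_add]
    · rw [Matrix.add_apply, Matrix.add_apply, hM2, hN2, sg_add, neg_add]
  one_mem' := by
    constructor
    · rw [Matrix.one_apply_eq, Matrix.one_apply_eq, sg_one]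
    · rw [Matrix.one_apply_ne (by decide), Matrix.one_apply_ne (by decide), sg_zero, neg_zero]
  algebraMap_mem' := by
    intro r
    constructor <;>
      simp [Matrix.algebraMap_matrix_apply, sg, Polynomial.C_comp]

lemma good2_all (z : Q) : good2 (rho2 z) := by
  have hz := mem_of_xy (S2m.comap rho2) ?_ ?_ z
  · exact hz
  · show good2 (rho2 (x))
    rw [rho2_x]
    constructor
    · show (-Polynomial.X : P1) = sg Polynomial.X
      rw [sg_X]
    · show (0 : P1) = -sg 0
      rw [sg_zero, neg_zero]
  · show good2 (rho2 (y))
    rw [rho2_y]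
    constructor
    · show (0 : P1) = sg 0
      rw [sg_zero]
    · show (Polynomial.X : P1) = -sg Polynomial.X
      rw [sg_X, neg_neg]

def c2Q : Q := (x) ^ 2 - (y) ^ 2

def B2 : Set Q := {z | ∃ m n : ℕ, n < 2 ∧ z = (x) ^ m * (y) ^ n}

def U2c : Set Q := {z | ∃ w r, r ∈ Submodule.span ℚ B2 ∧ z = c2Q * w + r}

lemma U2_zero : (0 : Q) ∈ U2c := ⟨0, 0, Submodule.zero_mem _, by rw [mul_zero, add_zero]⟩

lemma U2_add {z z' : Q} (h : z ∈ U2c) (h' : z' ∈ U2c) : z + z' ∈ U2c := by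
  obtain ⟨w, r, hr, rfl⟩ := h
  obtain ⟨w', r', hr', rfl⟩ := h'
  exact ⟨w + w', r + r', Submodule.add_mem _ hr hr', by rw [mul_add]; abel⟩

lemma U2_smul (a : ℚ) {z : Q} (h : z ∈ U2c) : a • z ∈ U2c := by
  obtain ⟨w, r, hr, rfl⟩ := h
  exact ⟨a • w, a • r, Submodule.smul_mem _ _ hr, by rw [smul_add, mul_smul_comm]⟩

lemma U2_span {z : Q} (h : z ∈ Submodule.span ℚ B2) : z ∈ U2c :=
  ⟨0, z, h, by rw [mul_zero, zero_add]⟩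

lemma U2_c2mul (z : Q) : c2Q * z ∈ U2c :=
  ⟨z, 0, Submodule.zero_mem _, by rw [add_zero]⟩

lemma U2_sub {z z' : Q} (h : z ∈ U2c) (h' : z' ∈ U2c) : z - z' ∈ U2c := by
  have h1 := U2_add h (U2_smul (-1 : ℚ) h')
  have h2 : (-1 : ℚ) • z' = -z' := neg_one_smul ℚ z'
  rw [h2, ← sub_eq_add_neg] at h1
  exact h1

lemma sign_smul (e : ℕ) (z : Q) : (-1 : Q) ^ e * z = ((-1 : ℚ) ^ e) • z := by
  have h1 : (-1 : Q) = algebraMap ℚ Q (-1) := by rw [map_neg, map_one]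
  rw [h1, ← map_pow, ← Algebra.smul_def]

lemma U2_sign (e : ℕ) {z : Q} (h : z ∈ U2c) : (-1 : Q) ^ e * z ∈ U2c := by
  rw [sign_smul]
  exact U2_smul _ h

lemma red2 (n m : ℕ) : (x) ^ m * (y) ^ n ∈ U2c := by
  induction n using Nat.strong_induction_on generalizing m with
  | _ n ih =>
    by_cases h : n < 2
    · exact U2_span (Submodule.subset_span ⟨m, n, h, rfl⟩)
    · obtain ⟨n', rfl⟩ : ∃ n', n = n' + 2 := ⟨n - 2, by omega⟩
      have key : (x) ^ m * (y) ^ (n' + 2)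
          = (x) ^ (m + 2) * (y) ^ n' - c2Q * ((x) ^ m * (y) ^ n') := by
        have h1 : (x) ^ m * (y) ^ (n' + 2) = ((x) ^ m * (y) ^ n') * (y) ^ 2 := by
          rw [pow_add, mul_assoc]
        have h2 : ((y) : Q) ^ 2 = (x) ^ 2 - c2Q := by rw [c2Q, sub_sub_cancel]
        have h3 : ((y) : Q) ^ n' * (x) ^ 2 = (x) ^ 2 * (y) ^ n' := by
          rw [ypow_xpow]
          have : ((-1 : Q)) ^ (n' * 2) = 1 := by
            rw [mul_comm n' 2, pow_mul, neg_one_sq_Q, one_pow]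
          rw [this, one_mul]
        have h4 : ((x) ^ m * (y) ^ n') * c2Q = c2Q * ((x) ^ m * (y) ^ n') :=
          (central_c2 _).symm
        calc (x) ^ m * (y) ^ (n' + 2) = ((x) ^ m * (y) ^ n') * ((x) ^ 2 - c2Q) := by
              rw [h1, h2]
        _ = ((x) ^ m * ((y) ^ n' * (x) ^ 2)) - ((x) ^ m * (y) ^ n') * c2Q := by
              rw [mul_sub, mul_assoc]
        _ = (x) ^ (m + 2) * (y) ^ n' - c2Q * ((x) ^ m * (y) ^ n') := by
              rw [h3, h4, ← mul_assoc, ← pow_add]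
      rw [key]
      exact U2_sub (ih n' (by omega) (m + 2)) (U2_c2mul _)

lemma U2_mul_span {r r' : Q} (hr : r ∈ Submodule.span ℚ B2) (hr' : r' ∈ Submodule.span ℚ B2) :
    r * r' ∈ U2c := by
  induction hr, hr' using Submodule.span_induction₂ with
  | mem_mem a b ha hb =>
    obtain ⟨m, n, _, rfl⟩ := ha
    obtain ⟨k, l, _, rfl⟩ := hb
    rw [mono_mul]
    exact U2_sign _ (red2 _ _)
  | zero_left b hb => rw [zero_mul]; exact U2_zero
  | zero_right a ha => rw [mul_zero]; exact U2_zero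
  | add_left a b c _ _ _ h1 h2 => rw [add_mul]; exact U2_add h1 h2
  | add_right a b c _ _ _ h1 h2 => rw [mul_add]; exact U2_add h1 h2
  | smul_left t a b _ _ h1 => rw [smul_mul_assoc]; exact U2_smul _ h1
  | smul_right t a b _ _ h1 => rw [mul_smul_comm]; exact U2_smul _ h1

lemma U2_mul {z z' : Q} (h : z ∈ U2c) (h' : z' ∈ U2c) : z * z' ∈ U2c := by
  obtain ⟨w, r, hr, rfl⟩ := h
  obtain ⟨w', r', hr', rfl⟩ := h'
  have e : (c2Q * w + r) * (c2Q * w' + r')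
      = c2Q * (w * (c2Q * w' + r')) + (c2Q * (r * w') + r * r') := by
    have h4 : r * (c2Q * w') = c2Q * (r * w') := by
      rw [← mul_assoc, show r * c2Q = c2Q * r from (central_c2 r).symm, mul_assoc]
    rw [add_mul, mul_assoc c2Q w _, mul_add r (c2Q * w') r', h4]
  rw [e]
  exact U2_add (U2_c2mul _) (U2_add (U2_c2mul _) (U2_mul_span hr hr'))

lemma one_B2 : (1 : Q) ∈ Submodule.span ℚ B2 :=
  Submodule.subset_span ⟨0, 0, by norm_num, by rw [pow_zero, pow_zero, one_mul]⟩

def SU2 : Subalgebra ℚ Q where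
  carrier := U2c
  mul_mem' := U2_mul
  add_mem' := U2_add
  one_mem' := U2_span one_B2
  zero_mem' := U2_zero
  algebraMap_mem' := fun r => by
    have : algebraMap ℚ Q r = r • 1 := by rw [Algebra.smul_def, mul_one]
    rw [this]
    exact U2_smul _ (U2_span one_B2)

lemma all_U2 (z : Q) : z ∈ U2c := by
  refine mem_of_xy SU2 ?_ ?_ z
  · exact U2_span (Submodule.subset_span ⟨1, 0, by norm_num, by rw [pow_one, pow_zero, mul_one]⟩)
  · exact U2_span (Submodule.subset_span ⟨0, 1, by norm_num, by rw [pow_zero, pow_one, one_mul]⟩)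

lemma divX_smul (a : ℚ) (p : P1) : (a • p).divX = a • p.divX := by
  ext n
  rw [Polynomial.coeff_divX, Polynomial.coeff_smul, Polynomial.coeff_smul, Polynomial.coeff_divX]

def lam2 : Matrix (Fin 2) (Fin 2) P1 →ₗ[ℚ] Q where
  toFun M := Polynomial.aeval (x) (M 0 0) + Polynomial.aeval (x) ((M 0 1).divX) * (y)
  map_add' M N := by
    show Polynomial.aeval (x) ((M + N) 0 0) + Polynomial.aeval (x) (((M + N) 0 1).divX) * (y) = _
    rw [Matrix.add_apply, Matrix.add_apply, map_add, Polynomial.divX_add, map_add, add_mul]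
    abel
  map_smul' a M := by
    show Polynomial.aeval (x) ((a • M) 0 0) + Polynomial.aeval (x) (((a • M) 0 1).divX) * (y) = _
    rw [Matrix.smul_apply, Matrix.smul_apply, divX_smul, map_smul, map_smul, RingHom.id_apply,
      smul_add, smul_mul_assoc]

lemma Xm2_diag : Xm2 = Matrix.diagonal ![Polynomial.X, -Polynomial.X] := by
  ext i j
  fin_cases i <;> fin_cases j <;>
    simp [Xm2, Matrix.diagonal_apply, Matrix.vecHead, Matrix.vecTail]

lemma Xm2_pow_00 (m : ℕ) : (Xm2 ^ m) 0 0 = Polynomial.X ^ m := by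
  rw [Xm2_diag, Matrix.diagonal_pow, Matrix.diagonal_apply_eq]
  simp

lemma Xm2_pow_01 (m : ℕ) : (Xm2 ^ m) 0 1 = 0 := by
  rw [Xm2_diag, Matrix.diagonal_pow, Matrix.diagonal_apply_ne _ (by decide)]

lemma Xm2_pow_10 (m : ℕ) : (Xm2 ^ m) 1 0 = 0 := by
  rw [Xm2_diag, Matrix.diagonal_pow, Matrix.diagonal_apply_ne _ (by decide)]

lemma lam2_xm (m : ℕ) : lam2 (rho2 ((x) ^ m)) = (x) ^ m := by
  rw [map_pow, rho2_x]
  show Polynomial.aeval (x) ((Xm2 ^ m) 0 0) + Polynomial.aeval (x) (((Xm2 ^ m) 0 1).divX) * (y)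
    = (x) ^ m
  rw [Xm2_pow_00, Xm2_pow_01, Polynomial.divX_zero, map_zero, zero_mul, add_zero, map_pow,
    Polynomial.aeval_X]

lemma lam2_xym (m : ℕ) : lam2 (rho2 ((x) ^ m * (y))) = (x) ^ m * (y) := by
  rw [map_mul, map_pow, rho2_x, rho2_y]
  show Polynomial.aeval (x) ((Xm2 ^ m * Ym2) 0 0)
      + Polynomial.aeval (x) (((Xm2 ^ m * Ym2) 0 1).divX) * (y) = (x) ^ m * (y)
  have h00 : (Xm2 ^ m * Ym2) 0 0 = 0 := by
    rw [entry00, Xm2_pow_00, Xm2_pow_01, zero_mul, add_zero,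
      show Ym2 0 0 = 0 from rfl, mul_zero]
  have h01 : (Xm2 ^ m * Ym2) 0 1 = Polynomial.X ^ (m + 1) := by
    rw [entry01, Xm2_pow_00, Xm2_pow_01, zero_mul, add_zero,
      show Ym2 0 1 = Polynomial.X from rfl, pow_succ]
  rw [h00, h01, map_zero, zero_add, Polynomial.divX_X_pow]
  simp only [Nat.succ_ne_zero, if_false, Nat.add_sub_cancel]
  rw [map_pow, Polynomial.aeval_X]

lemma lam2_span {r : Q} (hr : r ∈ Submodule.span ℚ B2) : lam2 (rho2 r) = r := by
  induction hr using Submodule.span_induction with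
  | mem b hb =>
    obtain ⟨m, n, hn, rfl⟩ := hb
    interval_cases n
    · rw [pow_zero, mul_one]
      exact lam2_xm m
    · rw [pow_one]
      exact lam2_xym m
  | zero => rw [map_zero, map_zero]
  | add a b _ _ h1 h2 => rw [map_add, map_add, h1, h2]
  | smul a z _ h1 => rw [map_smul, map_smul, h1]

lemma ker2 {z : Q} (hz : rho2 z = 0) : ∃ w, z = ((x) ^ 2 - (y) ^ 2) * w := by
  obtain ⟨w, r, hr, rfl⟩ := all_U2 z
  have hcw : rho2 (c2Q * w) = 0 := by
    rw [map_mul, show rho2 c2Q = 0 from rho2_c2, zero_mul]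
  have hrr : rho2 r = 0 := by
    have := hz
    rw [map_add, hcw, zero_add] at this
    exact this
  have : r = 0 := by
    rw [← lam2_span hr, hrr, map_zero]
  exact ⟨w, by rw [this, add_zero]; rfl⟩

lemma mat2_eq_zero {M : Matrix (Fin 2) (Fin 2) P1} (h00 : M 0 0 = 0) (h01 : M 0 1 = 0)
    (h10 : M 1 0 = 0) (h11 : M 1 1 = 0) : M = 0 := by
  apply Matrix.ext
  intro i j
  fin_cases i <;> fin_cases j
  · exact h00
  · exact h01
  · exact h10
  · exact h11

lemma prime2 : IsPrimeElt ((x) ^ 2 - (y) ^ 2) := by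
  rintro s t ⟨w, hw⟩
  have hw' : s * t = ((x) ^ 2 - (y) ^ 2) * w := by
    rcases hw with h | h
    · exact h
    · rw [h, ← central_c2 w]
  have hMN : rho2 s * rho2 t = 0 := by
    rw [← map_mul, hw', map_mul, rho2_c2, zero_mul]
  obtain ⟨hM1, hM2⟩ := good2_all s
  obtain ⟨hN1, hN2⟩ := good2_all t
  set M := rho2 s with hMdef
  set N := rho2 t with hNdef
  have e00 : M 0 0 * N 0 0 - M 0 1 * sg (N 0 1) = 0 := by
    have h := entry00 M N
    rw [hMN, Matrix.zero_apply, hN2] at h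
    linear_combination -h
  have e01 : M 0 0 * N 0 1 + M 0 1 * sg (N 0 0) = 0 := by
    have h := entry01 M N
    rw [hMN, Matrix.zero_apply, hN1] at h
    linear_combination -h
  by_cases hp : M 0 0 = 0
  · by_cases hq : M 0 1 = 0
    · left
      have hM0 : M = 0 :=
        mat2_eq_zero hp hq (by rw [hM2, hq, sg_zero, neg_zero]) (by rw [hM1, hp, sg_zero])
      obtain ⟨w', hw'⟩ := ker2 (hMdef ▸ hM0 : rho2 s = 0)
      exact ⟨w', Or.inl hw'⟩
    · right
      have hq' : sg (N 0 1) = 0 := by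
        rw [hp, zero_mul, zero_sub, neg_eq_zero] at e00
        rcases mul_eq_zero.mp e00 with h | h
        · exact absurd h hq
        · exact h
      have hp' : sg (N 0 0) = 0 := by
        rw [hp, zero_mul, zero_add] at e01
        rcases mul_eq_zero.mp e01 with h | h
        · exact absurd h hq
        · exact h
      have hN0 : N = 0 :=
        mat2_eq_zero (sg_eq_zero_iff.mp hp') (sg_eq_zero_iff.mp hq')
          (by rw [hN2, hq', neg_zero]) (by rw [hN1, sg_eq_zero_iff.mp hp', sg_zero])
      obtain ⟨w', hw'⟩ := ker2 (hNdef ▸ hN0 : rho2 t = 0)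
      exact ⟨w', Or.inl hw'⟩
  · right
    have key : M 0 0 * (N 0 0 * sg (N 0 0) + N 0 1 * sg (N 0 1)) = 0 := by
      linear_combination sg (N 0 0) * e00 + sg (N 0 1) * e01
    have hnorm : N 0 0 * sg (N 0 0) + N 0 1 * sg (N 0 1) = 0 := by
      rcases mul_eq_zero.mp key with h | h
      · exact absurd h hp
      · exact h
    obtain ⟨hp', hq'⟩ := L2 hnorm
    have hN0 : N = 0 :=
      mat2_eq_zero hp' hq' (by rw [hN2, hq', sg_zero, neg_zero]) (by rw [hN1, hp', sg_zero])
    obtain ⟨w', hw'⟩ := ker2 (hNdef ▸ hN0 : rho2 t = 0)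
    exact ⟨w', Or.inl hw'⟩

/-! ### Case 1: x^4 + 2 -/

def fZ : Polynomial ℤ := Polynomial.X ^ 4 + Polynomial.C 2

lemma fZ_monic : fZ.Monic := by
  apply Polynomial.monic_X_pow_add_C
  norm_num

lemma fZ_natDegree : fZ.natDegree = 4 := by
  rw [fZ]
  compute_degree!

lemma fZ_irred : Irreducible fZ := by
  apply Polynomial.irreducible_of_eisenstein_criterion
      (Ideal.span_singleton_prime (by norm_num : (2:ℤ) ≠ 0) |>.mpr Int.prime_two)
  · rw [fZ_monic.leadingCoeff, Ideal.mem_span_singleton]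
    norm_num
  · intro n hn
    have hdeg : fZ.degree = 4 := by
      rw [fZ]; exact Polynomial.degree_X_pow_add_C (by norm_num) 2
    rw [hdeg] at hn
    have hn4 : n < 4 := by exact_mod_cast hn
    rw [fZ, Polynomial.coeff_add, Polynomial.coeff_X_pow, Polynomial.coeff_C]
    interval_cases n <;> simp [Ideal.mem_span_singleton]
  · rw [fZ, Polynomial.degree_X_pow_add_C (by norm_num) 2]
    norm_num
  · rw [fZ]
    simp only [Polynomial.coeff_add, Polynomial.coeff_X_pow, Polynomial.coeff_C]
    rw [Ideal.span_singleton_pow, Ideal.mem_span_singleton]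
    norm_num
  · exact fZ_monic.isPrimitive

def fQ : Polynomial ℚ := Polynomial.X ^ 4 + Polynomial.C 2

lemma fQ_irred : Irreducible fQ := by
  have hmap : fZ.map (Int.castRingHom ℚ) = fQ := by
    rw [fZ, fQ, Polynomial.map_add, Polynomial.map_pow, Polynomial.map_X, Polynomial.map_C]
    norm_num
  rw [← hmap]
  exact (Polynomial.IsPrimitive.Int.irreducible_iff_irreducible_map_cast
    fZ_monic.isPrimitive).mp fZ_irred

instance fQ_fact : Fact (Irreducible fQ) := ⟨fQ_irred⟩

abbrev K0 := AdjoinRoot fQ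

noncomputable instance : Field K0 := AdjoinRoot.instField

abbrev M4 := Matrix (Fin 4) (Fin 4) ℚ

lemma aeval_Cq : Polynomial.aeval Cq fQ = 0 := by
  rw [fQ, map_add, Polynomial.aeval_X_pow, Polynomial.aeval_C]
  rw [show algebraMap ℚ M4 2 = (2 : M4) from map_ofNat _ 2]
  exact C4

def A0 : K0 →+* M4 :=
  Ideal.Quotient.lift (Ideal.span {fQ}) (Polynomial.aeval Cq).toRingHom (by
    intro g hg
    rcases Ideal.mem_span_singleton.1 hg with ⟨c, rfl⟩
    rw [AlgHom.toRingHom_eq_coe, RingHom.coe_coe, map_mul, aeval_Cq, zero_mul])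

lemma A0_mk (g : Polynomial ℚ) : A0 (AdjoinRoot.mk fQ g) = Polynomial.aeval Cq g :=
  Ideal.Quotient.lift_mk _ _ _

lemma A0_root : A0 (AdjoinRoot.root fQ) = Cq := by
  rw [AdjoinRoot.root, A0_mk, Polynomial.aeval_X]

lemma A0_algebraMap (a : ℚ) : A0 (algebraMap ℚ K0 a) = algebraMap ℚ M4 a := by
  rw [show algebraMap ℚ K0 a = AdjoinRoot.of fQ a from rfl, AdjoinRoot.of, RingHom.comp_apply, A0_mk, Polynomial.aeval_C]

lemma A0_smul (a : ℚ) (k : K0) : A0 (a • k) = a • A0 k := by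
  rw [Algebra.smul_def, map_mul, A0_algebraMap, ← Algebra.smul_def]

lemma A0_inj : Function.Injective A0 := A0.injective

lemma root_pow_fQ : (AdjoinRoot.root fQ) ^ 4 + algebraMap ℚ K0 2 = 0 := by
  have h0 : Polynomial.aeval (AdjoinRoot.root fQ) fQ = 0 := by
    rw [Polynomial.aeval_def]
    exact AdjoinRoot.eval₂_root fQ
  have h1 : Polynomial.aeval (AdjoinRoot.root fQ) fQ
      = (AdjoinRoot.root fQ) ^ 4 + algebraMap ℚ K0 2 := by
    show Polynomial.aeval (AdjoinRoot.root fQ) (Polynomial.X ^ 4 + Polynomial.C 2) = _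
    rw [map_add, Polynomial.aeval_X_pow, Polynomial.aeval_C]
  rw [← h1, h0]

lemma aeval_neg_root : Polynomial.aeval (-(AdjoinRoot.root fQ)) fQ = 0 := by
  show Polynomial.aeval (-(AdjoinRoot.root fQ)) (Polynomial.X ^ 4 + Polynomial.C 2) = 0
  rw [map_add, Polynomial.aeval_X_pow, Polynomial.aeval_C,
    Even.neg_pow (by decide : Even 4)]
  exact root_pow_fQ

def sK : K0 →ₐ[ℚ] K0 := AdjoinRoot.liftAlgHom fQ (Algebra.ofId ℚ K0) (-(AdjoinRoot.root fQ)) aeval_neg_root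

lemma sK_root : sK (AdjoinRoot.root fQ) = -(AdjoinRoot.root fQ) := by
  exact AdjoinRoot.liftAlgHom_root fQ (Algebra.ofId ℚ K0) (-(AdjoinRoot.root fQ))
    aeval_neg_root

lemma sK_inj : Function.Injective sK := sK.toRingHom.injective

lemma DA (k : K0) : Dq * A0 k = A0 (sK k) * Dq := by
  let SD : Subalgebra ℚ K0 :=
    { carrier := {k | Dq * A0 k = A0 (sK k) * Dq}
      mul_mem' := fun {k} {k'} hk hk' => by
        show Dq * A0 (k * k') = A0 (sK (k * k')) * Dq
        rw [map_mul, map_mul, map_mul, ← mul_assoc, hk, mul_assoc, hk', ← mul_assoc]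
      add_mem' := fun {k} {k'} hk hk' => by
        show Dq * A0 (k + k') = A0 (sK (k + k')) * Dq
        rw [map_add, map_add, map_add, mul_add, add_mul, hk, hk']
      one_mem' := by
        show Dq * A0 1 = A0 (sK 1) * Dq
        rw [map_one, map_one, map_one, mul_one, one_mul]
      zero_mem' := by
        show Dq * A0 0 = A0 (sK 0) * Dq
        rw [map_zero, map_zero, map_zero, mul_zero, zero_mul]
      algebraMap_mem' := fun a => by
        show Dq * A0 (algebraMap ℚ K0 a) = A0 (sK (algebraMap ℚ K0 a)) * Dq
        rw [AlgHom.commutes, A0_algebraMap, Algebra.commutes] }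
  have hroot : AdjoinRoot.root fQ ∈ SD := by
    show Dq * A0 (AdjoinRoot.root fQ) = A0 (sK (AdjoinRoot.root fQ)) * Dq
    rw [A0_root, sK_root, map_neg, A0_root, DC, neg_mul Cq Dq]
  have htop : ⊤ ≤ SD := by
    refine (AdjoinRoot.adjoinRoot_eq_top (f := fQ)).symm.le.trans ?_
    apply Algebra.adjoin_le
    intro w hw
    rw [Set.mem_singleton_iff.mp hw]
    exact hroot
  exact htop (Algebra.mem_top)

lemma DnA (n : ℕ) (k : K0) : Dq ^ n * A0 k = A0 (sK^[n] k) * Dq ^ n := by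
  induction n generalizing k with
  | zero => simp
  | succ n ih =>
    rw [pow_succ, Function.iterate_succ_apply]
    calc Dq ^ n * Dq * A0 k = Dq ^ n * (Dq * A0 k) := by rw [mul_assoc]
    _ = Dq ^ n * (A0 (sK k) * Dq) := by rw [DA]
    _ = (Dq ^ n * A0 (sK k)) * Dq := by rw [mul_assoc]
    _ = (A0 (sK^[n] (sK k)) * Dq ^ n) * Dq := by rw [ih]
    _ = A0 (sK^[n] (sK k)) * Dq ^ (n + 1) := by rw [mul_assoc, pow_succ]

lemma sK_iter_inj (n : ℕ) : Function.Injective (sK^[n] : K0 → K0) :=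
  Function.Injective.iterate sK_inj n

/-- membership in the `n`-th graded piece -/
def Vmem (n : ℕ) (A : M4) : Prop := ∃ k : K0, A = A0 k * Dq ^ n

lemma Vmem_zero (n : ℕ) : Vmem n 0 := ⟨0, by rw [map_zero, zero_mul]⟩

lemma Vmem_add {n : ℕ} {A B : M4} (hA : Vmem n A) (hB : Vmem n B) : Vmem n (A + B) := by
  obtain ⟨k, rfl⟩ := hA
  obtain ⟨k', rfl⟩ := hB
  exact ⟨k + k', by rw [map_add, add_mul]⟩

lemma Vmem_smul {n : ℕ} {A : M4} (a : ℚ) (hA : Vmem n A) : Vmem n (a • A) := by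
  obtain ⟨k, rfl⟩ := hA
  exact ⟨a • k, by rw [A0_smul, smul_mul_assoc]⟩

lemma Vmem_mul {a b : ℕ} {A B : M4} (hA : Vmem a A) (hB : Vmem b B) : Vmem (a + b) (A * B) := by
  obtain ⟨k, rfl⟩ := hA
  obtain ⟨k', rfl⟩ := hB
  refine ⟨k * sK^[a] k', ?_⟩
  rw [map_mul]
  calc A0 k * Dq ^ a * (A0 k' * Dq ^ b) = A0 k * (Dq ^ a * A0 k') * Dq ^ b := by
        rw [mul_assoc, mul_assoc, mul_assoc]
  _ = A0 k * (A0 (sK^[a] k') * Dq ^ a) * Dq ^ b := by rw [DnA]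
  _ = A0 k * A0 (sK^[a] k') * Dq ^ (a + b) := by rw [pow_add]; rw [mul_assoc, mul_assoc, mul_assoc]

lemma Dq_unit : IsUnit Dq := ⟨⟨Dq, Dq, D2, D2⟩, rfl⟩

lemma Vmem_mul_ne_zero {a b : ℕ} {A B : M4} (hA : Vmem a A) (hB : Vmem b B)
    (hA0 : A ≠ 0) (hB0 : B ≠ 0) : A * B ≠ 0 := by
  obtain ⟨k, rfl⟩ := hA
  obtain ⟨k', rfl⟩ := hB
  have hk : k ≠ 0 := by
    rintro rfl
    rw [map_zero, zero_mul] at hA0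
    exact hA0 rfl
  have hk' : k' ≠ 0 := by
    rintro rfl
    rw [map_zero, zero_mul] at hB0
    exact hB0 rfl
  have hmul := Vmem_mul (a := a) (b := b) ⟨k, rfl⟩ ⟨k', rfl⟩
  obtain ⟨k'', hk''⟩ := hmul
  intro hzero
  -- recompute the product explicitly
  have : A0 (k * sK^[a] k') * Dq ^ (a + b) = 0 := by
    calc A0 (k * sK^[a] k') * Dq ^ (a + b)
        = A0 k * Dq ^ a * (A0 k' * Dq ^ b) := by
          rw [map_mul]
          calc A0 k * A0 (sK^[a] k') * Dq ^ (a + b)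
              = A0 k * (A0 (sK^[a] k') * Dq ^ a) * Dq ^ b := by
                rw [pow_add, mul_assoc, mul_assoc, mul_assoc]
          _ = A0 k * (Dq ^ a * A0 k') * Dq ^ b := by rw [DnA]
          _ = A0 k * Dq ^ a * (A0 k' * Dq ^ b) := by rw [mul_assoc, mul_assoc, mul_assoc]
    _ = 0 := hzero
  have hne : A0 (k * sK^[a] k') ≠ 0 := by
    intro h0
    have : (k * sK^[a] k') = 0 := by
      apply A0_inj
      rw [h0, map_zero]
    rcases mul_eq_zero.mp this with h | h
    · exact hk h
    · refine hk' (sK_iter_inj a ?_)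
      rw [h, Function.iterate_fixed (map_zero sK) a]
  exact hne ((Dq_unit.pow (a + b)).mul_left_eq_zero.mp this)

def coeffM (n : ℕ) (M : Matrix (Fin 4) (Fin 4) P1) : M4 :=
  Matrix.of fun i j => (M i j).coeff n

lemma coeffM_mul (n : ℕ) (M N : Matrix (Fin 4) (Fin 4) P1) :
    coeffM n (M * N) = ∑ p ∈ Finset.HasAntidiagonal.antidiagonal n, coeffM p.1 M * coeffM p.2 N := by
  ext i j
  show ((M * N) i j).coeff n = _
  rw [Matrix.mul_apply, Polynomial.finset_sum_coeff]
  have lhs : ∀ k, (M i k * N k j).coeff n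
      = ∑ p ∈ Finset.HasAntidiagonal.antidiagonal n, (M i k).coeff p.1 * (N k j).coeff p.2 := fun k =>
    Polynomial.coeff_mul _ _ _
  rw [Finset.sum_congr rfl (fun k _ => lhs k)]
  rw [Matrix.sum_apply]
  rw [Finset.sum_comm]
  apply Finset.sum_congr rfl
  intro p _
  rw [Matrix.mul_apply]
  rfl

lemma coeffM_add (n : ℕ) (M N : Matrix (Fin 4) (Fin 4) P1) :
    coeffM n (M + N) = coeffM n M + coeffM n N := by
  ext i j
  show ((M + N) i j).coeff n = _
  rw [Matrix.add_apply, Polynomial.coeff_add]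
  rfl

lemma coeffM_smul (n : ℕ) (a : ℚ) (M : Matrix (Fin 4) (Fin 4) P1) :
    coeffM n (a • M) = a • coeffM n M := by
  ext i j
  show ((a • M) i j).coeff n = _
  rw [Matrix.smul_apply, Polynomial.coeff_smul]
  rfl

lemma coeffM_algebraMap (r : ℚ) (n : ℕ) :
    coeffM n (algebraMap ℚ (Matrix (Fin 4) (Fin 4) P1) r)
      = if n = 0 then algebraMap ℚ M4 r else 0 := by
  ext i j
  show ((algebraMap ℚ (Matrix (Fin 4) (Fin 4) P1) r) i j).coeff n = _
  rw [Matrix.algebraMap_matrix_apply]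
  by_cases hij : i = j
  · rw [if_pos hij]
    rcases Nat.eq_zero_or_pos n with rfl | hn
    · simp [Matrix.algebraMap_matrix_apply, hij, Polynomial.algebraMap_eq]
    · have hn' : n ≠ 0 := Nat.pos_iff_ne_zero.mp hn
      simp [Matrix.algebraMap_matrix_apply, hij, Polynomial.algebraMap_eq, hn',
        Polynomial.coeff_C]
  · rw [if_neg hij]
    rcases Nat.eq_zero_or_pos n with rfl | hn
    · simp [Matrix.algebraMap_matrix_apply, hij]
    · have hn' : n ≠ 0 := Nat.pos_iff_ne_zero.mp hn
      simp [Matrix.algebraMap_matrix_apply, hij, hn']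

def good1 (M : Matrix (Fin 4) (Fin 4) P1) : Prop := ∀ n, Vmem n (coeffM n M)

def S1m : Subalgebra ℚ (Matrix (Fin 4) (Fin 4) P1) where
  carrier := {M | good1 M}
  mul_mem' := by
    rintro M N hM hN n
    rw [coeffM_mul]
    apply Finset.sum_induction _ (Vmem n) (fun _ _ => Vmem_add) (Vmem_zero n)
    intro p hp
    have hsum : p.1 + p.2 = n := Finset.HasAntidiagonal.mem_antidiagonal.mp hp
    have := Vmem_mul (hM p.1) (hN p.2)
    rwa [hsum] at this
  add_mem' := by
    rintro M N hM hN n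
    rw [coeffM_add]
    exact Vmem_add (hM n) (hN n)
  one_mem' := by
    intro n
    have h1 : (1 : Matrix (Fin 4) (Fin 4) P1) = algebraMap ℚ _ 1 := (map_one _).symm
    rw [h1, coeffM_algebraMap]
    rcases Nat.eq_zero_or_pos n with rfl | hn
    · rw [if_pos rfl]
      exact ⟨1, by rw [map_one, pow_zero, mul_one, map_one]⟩
    · rw [if_neg (Nat.pos_iff_ne_zero.mp hn)]
      exact Vmem_zero n
  zero_mem' := by
    intro n
    have h0 : coeffM n (0 : Matrix (Fin 4) (Fin 4) P1) = 0 := by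
      ext i j
      show ((0 : Matrix (Fin 4) (Fin 4) P1) i j).coeff n = (0 : M4) i j
      rw [Matrix.zero_apply, Polynomial.coeff_zero, Matrix.zero_apply]
    rw [h0]
    exact Vmem_zero n
  algebraMap_mem' := by
    intro r n
    rw [coeffM_algebraMap]
    rcases Nat.eq_zero_or_pos n with rfl | hn
    · rw [if_pos rfl]
      exact ⟨algebraMap ℚ K0 r, by rw [A0_algebraMap, pow_zero, mul_one]⟩
    · rw [if_neg (Nat.pos_iff_ne_zero.mp hn)]
      exact Vmem_zero n

lemma coeffM_Cmap_zero (A : M4) : coeffM 0 (Cm A) = A := by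
  ext i j
  show ((Cm A) i j).coeff 0 = A i j
  rw [RingHom.mapMatrix_apply, Matrix.map_apply, Polynomial.coeff_C]
  rw [if_pos rfl]

lemma coeffM_Cmap_succ (A : M4) (n : ℕ) : coeffM (n + 1) (Cm A) = 0 := by
  ext i j
  show ((Cm A) i j).coeff (n + 1) = (0 : M4) i j
  rw [RingHom.mapMatrix_apply, Matrix.map_apply, Polynomial.coeff_C,
    if_neg (Nat.succ_ne_zero n), Matrix.zero_apply]

lemma good1_Xm1 : good1 Xm1 := by
  intro n
  rcases Nat.eq_zero_or_pos n with rfl | hn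
  · rw [Xm1, coeffM_Cmap_zero]
    exact ⟨AdjoinRoot.root fQ, by rw [A0_root, pow_zero, mul_one]⟩
  · obtain ⟨n', rfl⟩ : ∃ n', n = n' + 1 := ⟨n - 1, by omega⟩
    rw [Xm1, coeffM_Cmap_succ]
    exact Vmem_zero _

lemma Ym1_entry (i j : Fin 4) (n : ℕ) :
    (Ym1 i j).coeff n = if n = 1 then Dq i j else 0 := by
  have h : Ym1 i j = Polynomial.X * Polynomial.C (Dq i j) := by
    rw [Ym1, Matrix.smul_apply, RingHom.mapMatrix_apply, Matrix.map_apply, smul_eq_mul]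
  rw [h]
  match n with
  | 0 =>
    rw [Polynomial.mul_coeff_zero, Polynomial.coeff_X_zero, zero_mul, if_neg (by norm_num)]
  | (k + 1) =>
    rw [Polynomial.coeff_X_mul, Polynomial.coeff_C]
    rcases Nat.eq_zero_or_pos k with rfl | hk
    · rw [if_pos rfl, if_pos rfl]
    · rw [if_neg (Nat.pos_iff_ne_zero.mp hk), if_neg (by omega)]

lemma good1_Ym1 : good1 Ym1 := by
  intro n
  by_cases hn : n = 1
  · subst hn
    have h : coeffM 1 Ym1 = Dq := by
      ext i j
      show (Ym1 i j).coeff 1 = Dq i j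
      rw [Ym1_entry, if_pos rfl]
    rw [h]
    exact ⟨1, by rw [map_one, one_mul, pow_one]⟩
  · have h : coeffM n Ym1 = 0 := by
      ext i j
      show (Ym1 i j).coeff n = (0 : M4) i j
      rw [Ym1_entry, if_neg hn, Matrix.zero_apply]
    rw [h]
    exact Vmem_zero n

lemma good1_all (z : Q) : good1 (rho1 z) := by
  have hz := mem_of_xy (S1m.comap rho1) ?_ ?_ z
  · exact hz
  · show good1 (rho1 (x))
    rw [rho1_x]
    exact good1_Xm1
  · show good1 (rho1 (y))
    rw [rho1_y]
    exact good1_Ym1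

lemma key1 {M N : Matrix (Fin 4) (Fin 4) P1} (hM : good1 M) (hN : good1 N)
    (h : M * N = 0) : M = 0 ∨ N = 0 := by
  set P := matPolyEquiv M with hP
  set Qq := matPolyEquiv N with hQ
  have hPQ : P * Qq = 0 := by rw [hP, hQ, ← map_mul, h, map_zero]
  have hPc : ∀ n, P.coeff n = coeffM n M := by
    intro n
    ext i j
    rw [hP, matPolyEquiv_coeff_apply]
    rfl
  have hQc : ∀ n, Qq.coeff n = coeffM n N := by
    intro n
    ext i j
    rw [hQ, matPolyEquiv_coeff_apply]
    rfl
  by_cases hP0 : P = 0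
  · left
    apply matPolyEquiv.injective
    rw [← hP, hP0, map_zero]
  by_cases hQ0 : Qq = 0
  · right
    apply matPolyEquiv.injective
    rw [← hQ, hQ0, map_zero]
  exfalso
  have hlcP : P.leadingCoeff ≠ 0 := Polynomial.leadingCoeff_ne_zero.mpr hP0
  have hlcQ : Qq.leadingCoeff ≠ 0 := Polynomial.leadingCoeff_ne_zero.mpr hQ0
  have hVP : Vmem P.natDegree P.leadingCoeff := by
    rw [Polynomial.leadingCoeff, hPc]
    exact hM _
  have hVQ : Vmem Qq.natDegree Qq.leadingCoeff := by
    rw [Polynomial.leadingCoeff, hQc]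
    exact hN _
  have hne := Vmem_mul_ne_zero hVP hVQ hlcP hlcQ
  have hco := Polynomial.coeff_mul_degree_add_degree P Qq
  rw [hPQ, Polynomial.coeff_zero] at hco
  exact hne hco.symm

def c1Q : Q := (x) ^ 4 + 2

def B1 : Set Q := {z | ∃ m n : ℕ, m < 4 ∧ z = (x) ^ m * (y) ^ n}

def U1c : Set Q := {z | ∃ w r, r ∈ Submodule.span ℚ B1 ∧ z = c1Q * w + r}

lemma U1_zero : (0 : Q) ∈ U1c := ⟨0, 0, Submodule.zero_mem _, by rw [mul_zero, add_zero]⟩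

lemma U1_add {z z' : Q} (h : z ∈ U1c) (h' : z' ∈ U1c) : z + z' ∈ U1c := by
  obtain ⟨w, r, hr, rfl⟩ := h
  obtain ⟨w', r', hr', rfl⟩ := h'
  exact ⟨w + w', r + r', Submodule.add_mem _ hr hr', by rw [mul_add]; abel⟩

lemma U1_smul (a : ℚ) {z : Q} (h : z ∈ U1c) : a • z ∈ U1c := by
  obtain ⟨w, r, hr, rfl⟩ := h
  exact ⟨a • w, a • r, Submodule.smul_mem _ _ hr, by rw [smul_add, mul_smul_comm]⟩

lemma U1_span {z : Q} (h : z ∈ Submodule.span ℚ B1) : z ∈ U1c :=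
  ⟨0, z, h, by rw [mul_zero, zero_add]⟩

lemma U1_c1mul (z : Q) : c1Q * z ∈ U1c :=
  ⟨z, 0, Submodule.zero_mem _, by rw [add_zero]⟩

lemma U1_sub {z z' : Q} (h : z ∈ U1c) (h' : z' ∈ U1c) : z - z' ∈ U1c := by
  have h1 := U1_add h (U1_smul (-1 : ℚ) h')
  have h2 : (-1 : ℚ) • z' = -z' := neg_one_smul ℚ z'
  rw [h2, ← sub_eq_add_neg] at h1
  exact h1

lemma U1_sign (e : ℕ) {z : Q} (h : z ∈ U1c) : (-1 : Q) ^ e * z ∈ U1c := by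
  rw [sign_smul]
  exact U1_smul _ h

lemma two_mul_Q (z : Q) : (2 : Q) * z = (2 : ℚ) • z := by
  have h1 : (2 : Q) = algebraMap ℚ Q 2 := (map_ofNat _ 2).symm
  rw [h1, ← Algebra.smul_def]

lemma red1 (m n : ℕ) : (x) ^ m * (y) ^ n ∈ U1c := by
  induction m using Nat.strong_induction_on with
  | _ m ih =>
    by_cases h : m < 4
    · exact U1_span (Submodule.subset_span ⟨m, n, h, rfl⟩)
    · obtain ⟨m', rfl⟩ : ∃ m', m = m' + 4 := ⟨m - 4, by omega⟩
      have hx4 : ((x) : Q) ^ 4 = c1Q - 2 := by rw [c1Q, add_sub_cancel_right]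
      have key : (x) ^ (m' + 4) * (y) ^ n
          = c1Q * ((x) ^ m' * (y) ^ n) - (2 : Q) * ((x) ^ m' * (y) ^ n) := by
        calc (x) ^ (m' + 4) * (y) ^ n = (x) ^ m' * ((x) ^ 4 * (y) ^ n) := by
              rw [pow_add, mul_assoc]
        _ = (x) ^ m' * ((c1Q - 2) * (y) ^ n) := by rw [hx4]
        _ = (x) ^ m' * (c1Q * (y) ^ n) - (x) ^ m' * ((2 : Q) * (y) ^ n) := by
              rw [sub_mul, mul_sub]
        _ = c1Q * ((x) ^ m' * (y) ^ n) - (2 : Q) * ((x) ^ m' * (y) ^ n) := by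
              rw [← mul_assoc, ← mul_assoc,
                show (x) ^ m' * c1Q = c1Q * (x) ^ m' from (central_c1 _).symm,
                show (x) ^ m' * (2 : Q) = 2 * (x) ^ m' from
                  ((Commute.ofNat_left 2 ((x) ^ m')).eq).symm,
                mul_assoc, mul_assoc]
      rw [key]
      refine U1_sub (U1_c1mul _) ?_
      rw [two_mul_Q]
      exact U1_smul _ (ih m' (by omega))

lemma U1_mul_span {r r' : Q} (hr : r ∈ Submodule.span ℚ B1) (hr' : r' ∈ Submodule.span ℚ B1) :
    r * r' ∈ U1c := by
  induction hr, hr' using Submodule.span_induction₂ with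
  | mem_mem a b ha hb =>
    obtain ⟨m, n, _, rfl⟩ := ha
    obtain ⟨k, l, _, rfl⟩ := hb
    rw [mono_mul]
    exact U1_sign _ (red1 _ _)
  | zero_left b hb => rw [zero_mul]; exact U1_zero
  | zero_right a ha => rw [mul_zero]; exact U1_zero
  | add_left a b c _ _ _ h1 h2 => rw [add_mul]; exact U1_add h1 h2
  | add_right a b c _ _ _ h1 h2 => rw [mul_add]; exact U1_add h1 h2
  | smul_left t a b _ _ h1 => rw [smul_mul_assoc]; exact U1_smul _ h1
  | smul_right t a b _ _ h1 => rw [mul_smul_comm]; exact U1_smul _ h1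

lemma U1_mul {z z' : Q} (h : z ∈ U1c) (h' : z' ∈ U1c) : z * z' ∈ U1c := by
  obtain ⟨w, r, hr, rfl⟩ := h
  obtain ⟨w', r', hr', rfl⟩ := h'
  have h4 : r * (c1Q * w') = c1Q * (r * w') := by
    rw [← mul_assoc, show r * c1Q = c1Q * r from (central_c1 r).symm, mul_assoc]
  have e : (c1Q * w + r) * (c1Q * w' + r')
      = c1Q * (w * (c1Q * w' + r')) + (c1Q * (r * w') + r * r') := by
    rw [add_mul, mul_assoc c1Q w _, mul_add r (c1Q * w') r', h4]
  rw [e]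
  exact U1_add (U1_c1mul _) (U1_add (U1_c1mul _) (U1_mul_span hr hr'))

lemma one_B1 : (1 : Q) ∈ Submodule.span ℚ B1 :=
  Submodule.subset_span ⟨0, 0, by norm_num, by rw [pow_zero, pow_zero, one_mul]⟩

def SU1 : Subalgebra ℚ Q where
  carrier := U1c
  mul_mem' := U1_mul
  add_mem' := U1_add
  one_mem' := U1_span one_B1
  zero_mem' := U1_zero
  algebraMap_mem' := fun r => by
    have : algebraMap ℚ Q r = r • 1 := by rw [Algebra.smul_def, mul_one]
    rw [this]
    exact U1_smul _ (U1_span one_B1)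

lemma all_U1 (z : Q) : z ∈ U1c := by
  refine mem_of_xy SU1 ?_ ?_ z
  · exact U1_span (Submodule.subset_span ⟨1, 0, by norm_num, by rw [pow_one, pow_zero, mul_one]⟩)
  · exact U1_span (Submodule.subset_span ⟨0, 1, by norm_num, by rw [pow_zero, pow_one, one_mul]⟩)

def lam1 : Matrix (Fin 4) (Fin 4) P1 →ₗ[ℚ] Q where
  toFun M := ∑ i : Fin 4, (x) ^ (i : ℕ) * Polynomial.aeval (y) (M i 0)
  map_add' M N := by
    show ∑ i : Fin 4, (x) ^ (i : ℕ) * Polynomial.aeval (y) ((M + N) i 0) = _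
    simp only [Matrix.add_apply, map_add, mul_add, Finset.sum_add_distrib]
  map_smul' a M := by
    show ∑ i : Fin 4, (x) ^ (i : ℕ) * Polynomial.aeval (y) ((a • M) i 0) = _
    simp only [Matrix.smul_apply, map_smul, mul_smul_comm, RingHom.id_apply, Finset.smul_sum]

lemma Dq_diag : Dq = Matrix.diagonal ![1, -1, 1, -1] := by
  ext i j
  fin_cases i <;> fin_cases j <;>
    simp [Dq, Matrix.diagonal_apply, Matrix.vecHead, Matrix.vecTail]

lemma Dpow_col (n : ℕ) (k : Fin 4) : (Dq ^ n) k 0 = if k = 0 then 1 else 0 := by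
  rw [Dq_diag, Matrix.diagonal_pow]
  by_cases hk : k = 0
  · subst hk
    rw [if_pos rfl, Matrix.diagonal_apply_eq]
    show (![1, -1, 1, -1] 0 : ℚ) ^ n = 1
    rw [show (![1, -1, 1, -1] 0 : ℚ) = 1 from rfl, one_pow]
  · rw [if_neg hk, Matrix.diagonal_apply_ne _ hk]

lemma Ym1_pow (n : ℕ) : Ym1 ^ n = (Polynomial.X ^ n : P1) • Cm (Dq ^ n) := by
  rw [Ym1, _root_.smul_pow, map_pow]

lemma Cqpow_col (m : ℕ) (hm : m < 4) (i : Fin 4) :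
    (Cq ^ m) i 0 = if (i : ℕ) = m then 1 else 0 := by
  interval_cases m <;> fin_cases i <;>
    simp [pow_succ, pow_zero, Matrix.one_apply, Matrix.mul_apply, Fin.sum_univ_four, Cq,
      Matrix.vecHead, Matrix.vecTail]

lemma rho1_col (m n : ℕ) (hm : m < 4) (i : Fin 4) :
    (rho1 ((x) ^ m * (y) ^ n)) i 0
      = if (i : ℕ) = m then Polynomial.X ^ n else 0 := by
  have hrho : rho1 ((x) ^ m * (y) ^ n) = Xm1 ^ m * Ym1 ^ n := by
    rw [map_mul, map_pow, map_pow, rho1_x, rho1_y]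
  have hY : ∀ k : Fin 4, (Ym1 ^ n) k 0 = if k = 0 then Polynomial.X ^ n else 0 := by
    intro k
    rw [Ym1_pow, Matrix.smul_apply, RingHom.mapMatrix_apply, Matrix.map_apply, Dpow_col]
    by_cases hk : k = 0
    · rw [if_pos hk, if_pos hk, map_one, smul_eq_mul, mul_one]
    · rw [if_neg hk, if_neg hk, map_zero, smul_zero]
  have hX : (Xm1 ^ m) i 0 = Polynomial.C ((Cq ^ m) i 0) := by
    rw [Xm1, ← map_pow, RingHom.mapMatrix_apply, Matrix.map_apply]
  rw [hrho, Matrix.mul_apply, Fin.sum_univ_four, hY 0, hY 1, hY 2, hY 3]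
  rw [if_pos rfl, if_neg (by decide), if_neg (by decide), if_neg (by decide)]
  rw [mul_zero, mul_zero, mul_zero, add_zero, add_zero, add_zero]
  rw [hX, Cqpow_col m hm i]
  by_cases hi : (i : ℕ) = m
  · rw [if_pos hi, if_pos hi, map_one, one_mul]
  · rw [if_neg hi, if_neg hi, map_zero, zero_mul]

lemma lam1_mono (m n : ℕ) (hm : m < 4) :
    lam1 (rho1 ((x) ^ m * (y) ^ n)) = (x) ^ m * (y) ^ n := by
  show ∑ i : Fin 4, (x) ^ (i : ℕ) * Polynomial.aeval (y) ((rho1 ((x) ^ m * (y) ^ n)) i 0)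
    = (x) ^ m * (y) ^ n
  rw [Fin.sum_univ_four, rho1_col m n hm 0, rho1_col m n hm 1, rho1_col m n hm 2,
    rho1_col m n hm 3]
  have haev : Polynomial.aeval (y) ((Polynomial.X : P1) ^ n) = (y) ^ n := by
    rw [map_pow, Polynomial.aeval_X]
  interval_cases m <;>
    simp only [show ((0 : Fin 4) : ℕ) = 0 from rfl, show ((1 : Fin 4) : ℕ) = 1 from rfl,
      show ((2 : Fin 4) : ℕ) = 2 from rfl, show ((3 : Fin 4) : ℕ) = 3 from rfl,
      if_true, if_pos rfl] <;>
    norm_num <;>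
    rw [haev]

lemma ker1 {z : Q} (hz : rho1 z = 0) : ∃ w, z = ((x) ^ 4 + 2) * w := by
  obtain ⟨w, r, hr, rfl⟩ := all_U1 z
  have hcw : rho1 (c1Q * w) = 0 := by
    rw [map_mul, show rho1 c1Q = 0 from rho1_c1, zero_mul]
  have hrr : rho1 r = 0 := by
    have := hz
    rw [map_add, hcw, zero_add] at this
    exact this
  have hlam : ∀ u ∈ Submodule.span ℚ B1, lam1 (rho1 u) = u := by
    intro u hu
    induction hu using Submodule.span_induction with
    | mem b hb =>
      obtain ⟨m, n, hmlt, rfl⟩ := hb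
      exact lam1_mono m n hmlt
    | zero => rw [map_zero, map_zero]
    | add a b _ _ h1 h2 => rw [map_add, map_add, h1, h2]
    | smul a u' _ h1 => rw [map_smul, map_smul, h1]
  have hr0 : r = 0 := by
    rw [← hlam r hr, hrr, map_zero]
  exact ⟨w, by rw [hr0, add_zero]; rfl⟩

lemma prime1 : IsPrimeElt ((x) ^ 4 + 2) := by
  rintro s t ⟨w, hw⟩
  have hw' : s * t = ((x) ^ 4 + 2) * w := by
    rcases hw with h | h
    · exact h
    · rw [h, ← central_c1 w]
  have hMN : rho1 s * rho1 t = 0 := by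
    rw [← map_mul, hw', map_mul, rho1_c1, zero_mul]
  rcases key1 (good1_all s) (good1_all t) hMN with h | h
  · obtain ⟨w', hw'⟩ := ker1 h
    exact Or.inl ⟨w', Or.inl hw'⟩
  · obtain ⟨w', hw'⟩ := ker1 h
    exact Or.inr ⟨w', Or.inl hw'⟩

end QP17

theorem stmt_17 :
    IsPrimeElt (Qx ℚ (-1) ^ 4 + 2) ∧
    IsPrimeElt (Qx ℚ (-1) ^ 2 - Qy ℚ (-1) ^ 2) := by
  exact ⟨QP17.prime1, QP17.prime2⟩
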